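/- Let B ≤ A be finite abelian groups, and set G = {α ∈ Aut(A) : α(b) = b for all b ∈ B, and α(a)·a⁻¹ ∈ B for all a ∈ A}. Then G is an abelian subgroup of Aut(A), and the exponent of G equals gcd(exp(B), exp(A/B)). -/

import Mathlib

/-! The map `α ↦ (a B ↦ α a * a⁻¹)` is an isomorphism from `G` onto the commutative group
`Hom(A/B, B)`, with inverse `f ↦ (a ↦ a * f (a B))`. Homomorphisms `C → D` of finite abelian
groups are killed by `exp C` and by `exp D`; conversely, for a prime power `q` dividing both
exponents, an element `d ∈ D` of order `q` is the value of a homomorphism `C → D`, obtained by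
projecting `C ≅ ∏ ℤ/nᵢ` onto a factor with `q ∣ nᵢ` and sending `1` to `d`. Such a homomorphism
has order divisible by `q`, so `exp Hom(C, D) = gcd (exp C) (exp D)`. -/

theorem Nat.Prime.exists_pow_dvd_of_pow_dvd_finset_lcm {ι : Type*} {s : Finset ι} {f : ι → ℕ}
    {p k : ℕ} (hp : p.Prime) (hk : k ≠ 0) (hf : ∀ i ∈ s, f i ≠ 0) (h : p ^ k ∣ s.lcm f) :
    ∃ i ∈ s, p ^ k ∣ f i := by
  rw [hp.pow_dvd_iff_le_factorization (Finset.lcm_ne_zero_iff.2 hf),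
    Finset.factorization_lcm hf] at h
  obtain ⟨i, hi, hki⟩ := (Finset.le_sup_iff (Nat.pos_of_ne_zero hk)).1 h
  exact ⟨i, hi, (hp.pow_dvd_iff_le_factorization (hf i hi)).2 hki⟩

theorem ZMod.exists_monoidHom_apply_ofAdd_one {G : Type*} [Group G] {n : ℕ} {g : G}
    (hg : g ^ n = 1) : ∃ φ : Multiplicative (ZMod n) →* G, φ (.ofAdd 1) = g := by
  let ψ : ℤ →+ Additive G := zmultiplesHom (Additive G) (.ofMul g)
  have hψ : ψ n = 0 := by simpa [ψ] using congrArg Additive.ofMul hg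
  refine ⟨AddMonoidHom.toMultiplicativeLeft (ZMod.lift n ⟨ψ, hψ⟩), ?_⟩
  simpa [ψ] using congrArg Additive.toMul (ZMod.lift_coe n ⟨ψ, hψ⟩ 1)

theorem Monoid.exists_orderOf_eq_of_dvd_exponent {G : Type*} [CommMonoid G]
    (hG : Monoid.ExponentExists G) {d : ℕ} (hd : d ∣ Monoid.exponent G) :
    ∃ g : G, orderOf g = d := by
  obtain ⟨g, hg⟩ := Monoid.exists_orderOf_eq_exponent hG
  exact ⟨g ^ (orderOf g / d), orderOf_pow_orderOf_div (hg ▸ hG.exponent_ne_zero) (hg ▸ hd)⟩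

theorem CommGroup.exists_monoidHom_apply_eq_of_prime_pow_dvd_exponent {C D : Type*}
    [CommGroup C] [Finite C] [Group D] {p k : ℕ} (hp : p.Prime)
    (hk : p ^ k ∣ Monoid.exponent C) {d : D} (hd : d ^ p ^ k = 1) :
    ∃ f : C →* D, ∃ c : C, f c = d := by
  rcases eq_or_ne k 0 with rfl | hk₀
  · exact ⟨1, 1, by simpa using hd.symm⟩
  classical
  obtain ⟨ι, _, n, hn, ⟨e⟩⟩ := CommGroup.equiv_prod_multiplicative_zmod_of_finite C
  have hexp : Monoid.exponent C = Finset.univ.lcm n := by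
    simp [Monoid.exponent_eq_of_mulEquiv e, Monoid.exponent_pi, Monoid.exponent_multiplicative]
  obtain ⟨i, -, hi⟩ := hp.exists_pow_dvd_of_pow_dvd_finset_lcm hk₀
    (fun i _ => (Nat.zero_lt_of_lt (hn i)).ne') (hexp ▸ hk)
  obtain ⟨φ, hφ⟩ := ZMod.exists_monoidHom_apply_ofAdd_one
    (orderOf_dvd_iff_pow_eq_one.1 ((orderOf_dvd_of_pow_eq_one hd).trans hi))
  refine ⟨φ.comp ((Pi.evalMonoidHom _ i).comp e.toMonoidHom),
    e.symm (Pi.mulSingle i (.ofAdd 1)), ?_⟩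
  simpa using hφ

namespace Monoid

theorem exponent_monoidHom_dvd_gcd (G H : Type*) [Monoid G] [CommMonoid H] :
    exponent (G →* H) ∣ Nat.gcd (exponent G) (exponent H) :=
  Nat.dvd_gcd
    (exponent_dvd_of_forall_pow_eq_one fun f => MonoidHom.ext fun x => by
      rw [MonoidHom.pow_apply, ← map_pow, pow_exponent_eq_one, map_one, MonoidHom.one_apply])
    (exponent_dvd_of_forall_pow_eq_one fun f => MonoidHom.ext fun x => by
      rw [MonoidHom.pow_apply, pow_exponent_eq_one, MonoidHom.one_apply])

theorem gcd_exponent_dvd_exponent_monoidHom (G H : Type*) [CommGroup G] [Finite G]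
    [CommGroup H] [Finite H] : Nat.gcd (exponent G) (exponent H) ∣ exponent (G →* H) := by
  refine (Nat.dvd_iff_prime_pow_dvd_dvd _ _).2 fun p k hp hpk => ?_
  obtain ⟨d, hd⟩ := exists_orderOf_eq_of_dvd_exponent ExponentExists.of_finite
    (hpk.trans (Nat.gcd_dvd_right _ _))
  obtain ⟨f, c, rfl⟩ := CommGroup.exists_monoidHom_apply_eq_of_prime_pow_dvd_exponent hp
    (hpk.trans (Nat.gcd_dvd_left _ _)) (hd ▸ pow_orderOf_eq_one d)
  calc p ^ k = orderOf (MonoidHom.eval c f) := hd.symm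
    _ ∣ orderOf f := orderOf_map_dvd _ f
    _ ∣ exponent (G →* H) := order_dvd_exponent f

theorem exponent_monoidHom (G H : Type*) [CommGroup G] [Finite G] [CommGroup H] [Finite H] :
    exponent (G →* H) = Nat.gcd (exponent G) (exponent H) :=
  Nat.dvd_antisymm (exponent_monoidHom_dvd_gcd G H) (gcd_exponent_dvd_exponent_monoidHom G H)

end Monoid

/-- For a subgroup `B` of an abelian group `A`, the group of automorphisms of `A` that
fix `B` pointwise and induce the identity on `A ⧸ B`. -/
def relAutSubgroup {A : Type*} [CommGroup A] (B : Subgroup A) : Subgroup (MulAut A) where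
  carrier := {α | (∀ b ∈ B, α b = b) ∧ ∀ a : A, α a * a⁻¹ ∈ B}
  one_mem' := ⟨fun _ _ => rfl, fun a => by simpa using B.one_mem⟩
  mul_mem' := by
    rintro α β ⟨hα1, hα2⟩ ⟨hβ1, hβ2⟩
    constructor
    · intro b hb
      rw [MulAut.mul_apply, hβ1 b hb, hα1 b hb]
    · intro a
      have h : (α * β) a * a⁻¹ = α (β a) * (β a)⁻¹ * (β a * a⁻¹) := by
        rw [MulAut.mul_apply]; group
      rw [h]
      exact mul_mem (hα2 (β a)) (hβ2 a)
  inv_mem' := by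
    rintro α ⟨h1, h2⟩
    constructor
    · intro b hb
      conv_lhs => rw [← h1 b hb]
      exact MulAut.inv_apply_self A α b
    · intro a
      have h := inv_mem (h2 (α⁻¹ a))
      rw [MulAut.apply_inv_self] at h
      simpa [mul_inv_rev] using h

section relAutSubgroup

variable {A : Type*} [CommGroup A] {B : Subgroup A}

def mulAutOfQuotientHom (f : A ⧸ B →* B) : MulAut A where
  toFun a := a * f a
  invFun a := a * (f a)⁻¹
  left_inv a := by simp [QuotientGroup.mk_mul_of_mem]
  right_inv a := by simp [QuotientGroup.mk_mul_of_mem]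
  map_mul' a b := by simp [mul_mul_mul_comm]

@[simp]
theorem mulAutOfQuotientHom_apply (f : A ⧸ B →* B) (a : A) :
    mulAutOfQuotientHom f a = a * f a := rfl

theorem mulAutOfQuotientHom_mem_relAutSubgroup (f : A ⧸ B →* B) :
    mulAutOfQuotientHom f ∈ relAutSubgroup B :=
  ⟨fun b hb => by simp [(QuotientGroup.eq_one_iff b).2 hb], fun a => by simp⟩

def quotientHomOfMemRelAutSubgroup {α : MulAut A} (hα : α ∈ relAutSubgroup B) : A ⧸ B →* B :=
  QuotientGroup.lift B
    { toFun a := ⟨α a * a⁻¹, hα.2 a⟩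
      map_one' := by simp
      map_mul' a b := Subtype.ext <| by
        simp only [map_mul, mul_inv, Subgroup.coe_mul]; exact mul_mul_mul_comm .. }
    fun b hb => by ext; simp [hα.1 b hb]

@[simp]
theorem quotientHomOfMemRelAutSubgroup_apply {α : MulAut A} (hα : α ∈ relAutSubgroup B)
    (a : A) : (quotientHomOfMemRelAutSubgroup hα a : A) = α a * a⁻¹ := rfl

variable (B) in
def relAutSubgroupEquiv : (A ⧸ B →* B) ≃* relAutSubgroup B where
  toFun f := ⟨mulAutOfQuotientHom f, mulAutOfQuotientHom_mem_relAutSubgroup f⟩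
  invFun α := quotientHomOfMemRelAutSubgroup α.2
  left_inv f := by ext; simp
  right_inv α := by ext a; simp
  map_mul' f g := by
    ext a
    simp only [mulAutOfQuotientHom_apply, MonoidHom.mul_apply, Subgroup.coe_mul,
      MulMemClass.mk_mul_mk, MulAut.mul_apply, SetLike.coe_mem, QuotientGroup.mk_mul_of_mem]
    ac_rfl

end relAutSubgroup

/-- Let `B ≤ A` be finite abelian groups and let
`G = {α ∈ Aut A | α` fixes `B` pointwise and `α a * a⁻¹ ∈ B` for all `a}`.
Then `G` is abelian, and `exp G = gcd (exp B) (exp (A ⧸ B))`. -/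
theorem relAutSubgroup_commutative_and_exponent
    {A : Type*} [CommGroup A] [Finite A] (B : Subgroup A) :
    (∀ α ∈ relAutSubgroup B, ∀ β ∈ relAutSubgroup B, α * β = β * α) ∧
    Monoid.exponent (relAutSubgroup B) =
      Nat.gcd (Monoid.exponent B) (Monoid.exponent (A ⧸ B)) := by
  let e := relAutSubgroupEquiv B
  refine ⟨fun α hα β hβ => ?_, ?_⟩
  · have hcomm : (⟨α, hα⟩ * ⟨β, hβ⟩ : relAutSubgroup B) = ⟨β, hβ⟩ * ⟨α, hα⟩ :=
      e.symm.injective (by rw [map_mul, map_mul, mul_comm])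
    exact congrArg Subtype.val hcomm
  · rw [← Monoid.exponent_eq_of_mulEquiv e, Monoid.exponent_monoidHom, Nat.gcd_comm]
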